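/- Let f : {0,1/2,1}^V → ℝ be bisubmodular (with ⊓ rounding towards 1/2 and ⊔ rounding away from 1/2, coordinatewise), let X* be a global minimizer and X an integral minimizer (minimizer over {0,1}^V). Then the point Y agreeing with X* on all coordinates where X* is integral and with X on coordinates where X* = 1/2 is also an integral minimizer (persistence of bisubmodular functions). -/
import Mathlib


/-- Bisubmodular meet on `{0, 1/2, 1}`: of `⌈x+y⌉/2` and `⌊x+y⌋/2`, the
value closer to `1/2`. -/
def hinf (x y : ℚ) : ℚ :=
  if |(⌈x + y⌉ : ℚ) / 2 - 1 / 2| ≤ |(⌊x + y⌋ : ℚ) / 2 - 1 / 2| then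
    (⌈x + y⌉ : ℚ) / 2
  else
    (⌊x + y⌋ : ℚ) / 2

/-- Bisubmodular join on `{0, 1/2, 1}`: of `⌈x+y⌉/2` and `⌊x+y⌋/2`, the
value further from `1/2`. -/
def hsup (x y : ℚ) : ℚ :=
  if |(⌈x + y⌉ : ℚ) / 2 - 1 / 2| ≤ |(⌊x + y⌋ : ℚ) / 2 - 1 / 2| then
    (⌊x + y⌋ : ℚ) / 2
  else
    (⌈x + y⌉ : ℚ) / 2


private lemma ceil_half : ⌈(1/2:ℚ)⌉ = 1 := by norm_num [Int.ceil_eq_iff]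
private lemma ceil_3half : ⌈(3/2:ℚ)⌉ = 2 := by norm_num [Int.ceil_eq_iff]
private lemma floor_half : ⌊(1/2:ℚ)⌋ = 0 := by norm_num [Int.floor_eq_iff]
private lemma floor_3half : ⌊(3/2:ℚ)⌋ = 1 := by norm_num [Int.floor_eq_iff]

private lemma ceil_half' : ⌈(2⁻¹:ℚ)⌉ = 1 := by norm_num [Int.ceil_eq_iff]
private lemma ceil_3half' : ⌈(3/2:ℚ)⌉ = 2 := ceil_3half
private lemma floor_half' : ⌊(2⁻¹:ℚ)⌋ = 0 := by norm_num [Int.floor_eq_iff]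

private lemma hsup_00 : hsup 0 0 = 0 := by norm_num [hsup]
private lemma hsup_01 : hsup 0 1 = 2⁻¹ := by norm_num [hsup]
private lemma hsup_h0 : hsup 2⁻¹ 0 = 0 := by
  norm_num [hsup, ceil_half, floor_half]
private lemma hsup_h1 : hsup 2⁻¹ 1 = 1 := by
  norm_num [hsup, ceil_3half, floor_3half]
private lemma hsup_10 : hsup 1 0 = 2⁻¹ := by norm_num [hsup]
private lemma hsup_11 : hsup 1 1 = 1 := by norm_num [hsup]
private lemma hsup_0h : hsup 0 2⁻¹ = 0 := by
  norm_num [hsup, ceil_half, floor_half]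
private lemma hsup_1h : hsup 1 2⁻¹ = 1 := by
  norm_num [hsup, ceil_3half, floor_3half]
private lemma hsup_hh : hsup 2⁻¹ 2⁻¹ = 2⁻¹ := by norm_num [hsup]

private lemma hinf_00 : hinf 0 0 = 0 := by norm_num [hinf]
private lemma hinf_01 : hinf 0 1 = 2⁻¹ := by norm_num [hinf]
private lemma hinf_h0 : hinf 2⁻¹ 0 = 2⁻¹ := by
  norm_num [hinf, ceil_half, floor_half]
private lemma hinf_h1 : hinf 2⁻¹ 1 = 2⁻¹ := by
  norm_num [hinf, ceil_3half, floor_3half]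
private lemma hinf_10 : hinf 1 0 = 2⁻¹ := by norm_num [hinf]
private lemma hinf_11 : hinf 1 1 = 1 := by norm_num [hinf]
private lemma hinf_0h : hinf 0 2⁻¹ = 2⁻¹ := by
  norm_num [hinf, ceil_half, floor_half]
private lemma hinf_1h : hinf 1 2⁻¹ = 2⁻¹ := by
  norm_num [hinf, ceil_3half, floor_3half]
private lemma hinf_hh : hinf 2⁻¹ 2⁻¹ = 2⁻¹ := by norm_num [hinf]

attribute [local simp] hsup_00 hsup_01 hsup_h0 hsup_h1 hsup_10 hsup_11
  hsup_0h hsup_1h hsup_hh hinf_00 hinf_01 hinf_h0 hinf_h1 hinf_10 hinf_11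
  hinf_0h hinf_1h hinf_hh

theorem stmt19 {V : Type*} (f : (V → ℚ) → ℝ)
    (hbis : ∀ A B : V → ℚ,
      (∀ v, A v = 0 ∨ A v = 1 / 2 ∨ A v = 1) →
      (∀ v, B v = 0 ∨ B v = 1 / 2 ∨ B v = 1) →
      f A + f B ≥ f (fun v => hinf (A v) (B v)) + f (fun v => hsup (A v) (B v)))
    (Xs : V → ℚ) (hXs : ∀ v, Xs v = 0 ∨ Xs v = 1 / 2 ∨ Xs v = 1)
    (hXsmin : ∀ A : V → ℚ, (∀ v, A v = 0 ∨ A v = 1 / 2 ∨ A v = 1) → f Xs ≤ f A)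
    (X : V → ℚ) (hX : ∀ v, X v = 0 ∨ X v = 1)
    (hXmin : ∀ A : V → ℚ, (∀ v, A v = 0 ∨ A v = 1) → f X ≤ f A) :
    (∀ v, (if Xs v = 1 / 2 then X v else Xs v) = 0 ∨
      (if Xs v = 1 / 2 then X v else Xs v) = 1) ∧
    ∀ A : V → ℚ, (∀ v, A v = 0 ∨ A v = 1) →
      f (fun v => if Xs v = 1 / 2 then X v else Xs v) ≤ f A := by
  have hXdom : ∀ v, X v = 0 ∨ X v = 1 / 2 ∨ X v = 1 := fun v =>
    (hX v).elim Or.inl (fun h => Or.inr (Or.inr h))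
  set Y : V → ℚ := fun v => if Xs v = 1 / 2 then X v else Xs v with hYdef
  set J : V → ℚ := fun v => hsup (Xs v) (X v) with hJdef
  have hYdom : ∀ v, Y v = 0 ∨ Y v = 1 := by
    intro v
    rcases hXs v with g | g | g <;> rcases hX v with h | h <;>
      simp [hYdef, g, h]
  have hJdom : ∀ v, J v = 0 ∨ J v = 1 / 2 ∨ J v = 1 := by
    intro v
    rcases hXs v with g | g | g <;> rcases hX v with h | h <;>
      simp [hJdef, g, h]
  have hMdom : ∀ v, hinf (Xs v) (X v) = 0 ∨ hinf (Xs v) (X v) = 1 / 2 ∨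
      hinf (Xs v) (X v) = 1 := by
    intro v
    rcases hXs v with g | g | g <;> rcases hX v with h | h <;> simp [g, h]
  have hNdom : ∀ v, hinf (Xs v) (J v) = 0 ∨ hinf (Xs v) (J v) = 1 / 2 ∨
      hinf (Xs v) (J v) = 1 := by
    intro v
    rcases hXs v with g | g | g <;> rcases hX v with h | h <;>
      simp [hJdef, g, h]
  have hsupY : (fun v => hsup (Xs v) (J v)) = Y := by
    funext v
    rcases hXs v with g | g | g <;> rcases hX v with h | h <;>
      simp [hJdef, hYdef, g, h]
  have h1 := hbis Xs X hXs hXdom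
  have h2 := hXsmin _ hMdom
  have h3 := hbis Xs J hXs hJdom
  rw [hsupY] at h3
  have h4 := hXsmin _ hNdom
  refine ⟨hYdom, fun A hA => le_trans ?_ (hXmin A hA)⟩
  linarith
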